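/- arXiv:2308.06372 — 3 statements merged into one kernel-verified Lean document; each statement's English description precedes it below -/
import Mathlib

section
/- Let m ≥ 1, π a permutation of {1,…,m}, and α₁,…,α_m ∈ ℝ with a' = -(1/2)∑_{n=1}^m ln((1+e^{2α_n})/2), and f_r as above. Then for each fixed n ∈ {1,…,m}: ∑_{x ∈ {0,1}^m, x̃_{π(n)} = 1} e^{2 f_r(x)} = (e^{2α_n}/(1+e^{2α_n})) · 2^m. -/
/-!
The change of variables `x ↦ x̃` is a bijection of `(ZMod 2)^m` (the last coordinate of `x ∘ π`
is read off directly and the others follow by back-substitution), so the sum may be taken over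
`x̃`. In the variables `x̃` the weight `e^{2 f_r}` factorises over the coordinates, and summing the
factors with `x̃_{π(n)} = 1` fixed gives `e^{2α_n} ∏_{k ≠ n} (1 + e^{2α_k})`, while the
normalisation `a'` contributes `2^m / ∏_k (1 + e^{2α_k})`.
-/

open Finset

def adjSum {G : Type*} [Add G] {m : ℕ} (y : Fin m → G) (k : Fin m) : G :=
  if h : (k : ℕ) + 1 < m then y k + y ⟨k + 1, h⟩ else y k

theorem adjSum_injective {G : Type*} [Add G] [IsRightCancelAdd G] {m : ℕ} :
    Function.Injective (adjSum : (Fin m → G) → Fin m → G) := by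
  intro y y' h
  have agree : ∀ d (k : Fin m), (k : ℕ) + d + 1 = m → y k = y' k := by
    intro d
    induction d with
    | zero =>
      intro k hk
      simpa [adjSum, show ¬ (k : ℕ) + 1 < m by omega] using congrFun h k
    | succ d ih =>
      intro k hk
      have hlt : (k : ℕ) + 1 < m := by omega
      have hnext := ih ⟨k + 1, hlt⟩ (by simp only; omega)
      have hk' := congrFun h k
      simp only [adjSum, dif_pos hlt, hnext] at hk'
      exact add_right_cancel hk'
  funext k
  exact agree (m - 1 - k) k (by omega)

theorem sum_filter_prod_pow_val {ι R : Type*} [Fintype ι] [DecidableEq ι] [CommSemiring R]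
    (w : ι → R) (n : ι) :
    ∑ y ∈ univ.filter (fun y : ι → ZMod 2 => y n = 1), ∏ k, w k ^ (y k).val
      = w n * ∏ k ∈ univ.erase n, (1 + w k) := by
  have hfactor : ∀ y : ι → ZMod 2,
      (if y n = 1 then ∏ k, w k ^ (y k).val else 0)
        = ∏ k, (if k = n then ((y k).val : R) else 1) * w k ^ (y k).val := by
    intro y
    rw [prod_mul_distrib, Fintype.prod_ite_eq']
    rcases (by decide : ∀ v : ZMod 2, v = 0 ∨ v = 1) (y n) with h | h <;> simp [h, ZMod.val_one]
  have hsum : ∀ k, ∑ v : ZMod 2, (if k = n then (v.val : R) else 1) * w k ^ v.val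
      = if k = n then w k else 1 + w k := by
    intro k
    rw [show (univ : Finset (ZMod 2)) = {0, 1} by decide, sum_pair zero_ne_one]
    split_ifs <;> simp [ZMod.val_one]
  rw [sum_filter, Fintype.sum_congr _ _ hfactor,
    ← Fintype.prod_sum fun k (v : ZMod 2) => (if k = n then (v.val : R) else 1) * w k ^ v.val,
    Fintype.prod_congr _ _ hsum,
    ← mul_prod_erase univ _ (mem_univ n), if_pos rfl]
  congr 1
  exact prod_congr rfl fun k hk => if_neg (ne_of_mem_erase hk)

open Real in
theorem exp_two_mul_sum_mul_add {ι : Type*} [Fintype ι] (α : ι → ℝ) (v : ι → ℕ) (a : ℝ) :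
    exp (2 * (∑ k, α k * v k + a)) = exp (2 * a) * ∏ k, exp (2 * α k) ^ v k := by
  simp only [← exp_nat_mul, ← exp_sum, ← exp_add, mul_add, mul_sum]
  rw [add_comm]
  congr 2
  exact sum_congr rfl fun k _ => by ring

open Real in
theorem exp_neg_sum_log_half_one_add {ι : Type*} [Fintype ι] (w : ι → ℝ)
    (hw : ∀ k, 0 < 1 + w k) :
    exp (-∑ k, log ((1 + w k) / 2)) = 2 ^ Fintype.card ι / ∏ k, (1 + w k) := by
  rw [exp_neg, exp_sum, prod_congr rfl fun k _ => exp_log (half_pos (hw k)), prod_div_distrib,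
    prod_const, card_univ, inv_div]

theorem stmt_2_general (m : ℕ) (π : Equiv.Perm (Fin m))
    (α : Fin m → ℝ) (a' : ℝ)
    (xt : (Fin m → ZMod 2) → Fin m → ZMod 2)
    (hxt : ∀ x n, xt x n =
      if h : (n : ℕ) + 1 < m then x (π n) + x (π ⟨(n : ℕ) + 1, h⟩) else x (π n))
    (fr : (Fin m → ZMod 2) → ℝ)
    (hfr : ∀ x, fr x = (∑ k : Fin m, α k * ((xt x k).val : ℝ)) + a')
    (ha' : a' = -(1/2) * ∑ n : Fin m, Real.log ((1 + Real.exp (2 * α n)) / 2))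
    (n : Fin m) :
    ∑ x ∈ Finset.univ.filter (fun x : Fin m → ZMod 2 => xt x n = 1),
        Real.exp (2 * fr x)
      = Real.exp (2 * α n) / (1 + Real.exp (2 * α n)) * 2 ^ m := by
  have hxt_eq : xt = fun x => adjSum (x ∘ π) := funext fun x => funext (hxt x)
  have hbij : Function.Bijective xt := by
    rw [hxt_eq]
    exact Finite.injective_iff_bijective.mp
      (adjSum_injective.comp π.surjective.injective_comp_right)
  set w : Fin m → ℝ := fun k => Real.exp (2 * α k)
  have hw : ∀ k, 0 < 1 + w k := fun k => add_pos one_pos (Real.exp_pos _)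
  have hnorm : Real.exp (2 * a') = 2 ^ m / ∏ k, (1 + w k) := by
    have h := exp_neg_sum_log_half_one_add w hw
    rw [Fintype.card_fin] at h
    rw [← h, ha']
    congr 1
    ring
  calc _ = Real.exp (2 * a') * ∑ y ∈ univ.filter (fun y : Fin m → ZMod 2 => y n = 1),
          ∏ k, w k ^ (y k).val := by
        rw [mul_sum]
        exact sum_bijective xt hbij (by simp) fun x _ => by
          rw [hfr, exp_two_mul_sum_mul_add α fun k => (xt x k).val]
    _ = 2 ^ m / ((1 + w n) * ∏ k ∈ univ.erase n, (1 + w k))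
          * (w n * ∏ k ∈ univ.erase n, (1 + w k)) := by
        rw [sum_filter_prod_pow_val, hnorm, ← mul_prod_erase univ _ (mem_univ n)]
    _ = w n / (1 + w n) * 2 ^ m := by
        have hrest : ∏ k ∈ univ.erase n, (1 + w k) ≠ 0 :=
          prod_ne_zero_iff.mpr fun k _ => (hw k).ne'
        field_simp

theorem stmt_2 (m : ℕ) (hm : 1 ≤ m) (π : Equiv.Perm (Fin m))
    (α : Fin m → ℝ) (a' : ℝ)
    (xt : (Fin m → ZMod 2) → Fin m → ZMod 2)
    (hxt : ∀ x n, xt x n =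
      if h : (n : ℕ) + 1 < m then x (π n) + x (π ⟨(n : ℕ) + 1, h⟩) else x (π n))
    (fr : (Fin m → ZMod 2) → ℝ)
    (hfr : ∀ x, fr x = (∑ k : Fin m, α k * ((xt x k).val : ℝ)) + a')
    (ha' : a' = -(1/2) * ∑ n : Fin m, Real.log ((1 + Real.exp (2 * α n)) / 2))
    (n : Fin m) :
    ∑ x ∈ Finset.univ.filter (fun x : Fin m → ZMod 2 => xt x n = 1),
        Real.exp (2 * fr x)
      = Real.exp (2 * α n) / (1 + Real.exp (2 * α n)) * 2 ^ m :=
  stmt_2_general m π α a' xt hxt fr hfr ha' n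
end

section
/- With the same setup (f_r with normalization a' = -(1/2)∑ ln((1+e^{2α_n})/2)), for each n: ∑_{x : x̃_{π(n)}=1} e^{2f_r(x)} = e^{2α_n} · ∑_{x : x̃_{π(n)}=0} e^{2f_r(x)}, and ∑_{x : x̃_{π(n)}=0} e^{2f_r(x)} = 2^m/(1+e^{2α_n}). -/
/-!
In the coordinates `y = x̃`, the weight `exp (2 f_r)` is a product over `k` of factors
`2 exp (2 α_k y_k) / (1 + exp (2 α_k))`, each summing to `2` over `y_k ∈ {0, 1}`; this is
exactly what the normalization `a'` achieves. The change of variables `x ↦ x̃` is a bijection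
of `(ZMod 2)^m` (a permutation followed by adjacent sums, which can be undone from the last
coordinate downwards), so the sum over `{x̃_n = c}` is
`2 exp (2 α_n c) / (1 + exp (2 α_n)) · 2^(m-1)`.
-/

open Finset Function

section AdjacentSum

variable {M : Type*} [Add M] [IsRightCancelAdd M] {m : ℕ}

def adjacentSum (y : Fin m → M) (k : Fin m) : M :=
  if h : (k : ℕ) + 1 < m then y k + y ⟨k + 1, h⟩ else y k

theorem adjacentSum_injective : Injective (adjacentSum : (Fin m → M) → Fin m → M) := by
  intro y z hyz
  have key : ∀ d k (hk : k < m), k + d + 1 = m → y ⟨k, hk⟩ = z ⟨k, hk⟩ := by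
    intro d
    induction d with
    | zero =>
      intro k hk hkm
      simpa [adjacentSum, show ¬ k + 1 < m by omega] using congr_fun hyz ⟨k, hk⟩
    | succ d ih =>
      intro k hk hkm
      have hk1 : k + 1 < m := by omega
      have hadj := congr_fun hyz ⟨k, hk⟩
      simp only [adjacentSum, dif_pos hk1] at hadj
      rw [ih (k + 1) hk1 (by omega)] at hadj
      exact add_right_cancel hadj
  funext k
  exact key (m - k - 1) k k.isLt (by omega)

end AdjacentSum

theorem sum_filter_apply_eq_mul_prod_erase {ι β R : Type*} [Fintype ι] [DecidableEq ι]
    [Fintype β] [DecidableEq β] [CommSemiring R] (w : ι → β → R) (n : ι) (c : β) :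
    ∑ y ∈ univ.filter (fun y : ι → β => y n = c), ∏ k, w k (y k)
      = w n c * ∏ k ∈ univ.erase n, ∑ b, w k b := by
  have hfilter : univ.filter (fun y : ι → β => y n = c)
      = Fintype.piFinset (fun k => if k = n then {c} else univ) := by
    ext y
    simp only [mem_filter, mem_univ, true_and, Fintype.mem_piFinset]
    refine ⟨fun h k => ?_, fun h => by simpa using h n⟩
    split_ifs with hk <;> simp [hk, h]
  rw [hfilter, ← prod_univ_sum, ← mul_prod_erase univ _ (mem_univ n)]
  congr 1
  · simp
  · exact prod_congr rfl fun k hk => by rw [if_neg (ne_of_mem_erase hk)]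

theorem exp_two_mul_sum_add_eq_prod {ι : Type*} [Fintype ι] (α b : ι → ℝ) (a' : ℝ)
    (ha' : a' = -(1/2) * ∑ k, Real.log ((1 + Real.exp (2 * α k)) / 2)) :
    Real.exp (2 * (∑ k, α k * b k + a'))
      = ∏ k, 2 * Real.exp (2 * α k * b k) / (1 + Real.exp (2 * α k)) := by
  have hsum : 2 * (∑ k, α k * b k + a')
      = ∑ k, (2 * α k * b k - Real.log ((1 + Real.exp (2 * α k)) / 2)) := by
    rw [ha', sum_sub_distrib]
    simp only [mul_assoc, ← mul_sum]
    ring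
  rw [hsum, Real.exp_sum]
  refine prod_congr rfl fun k _ => ?_
  rw [Real.exp_sub, Real.exp_log (by positivity)]
  field_simp

theorem sum_zmod_two_exp_div (a : ℝ) :
    ∑ b : ZMod 2, 2 * Real.exp (2 * a * b.val) / (1 + Real.exp (2 * a)) = 2 := by
  refine (Fin.sum_univ_two
    (fun b : ZMod 2 => 2 * Real.exp (2 * a * b.val) / (1 + Real.exp (2 * a)))).trans ?_
  field_simp
  simp [ZMod.val]

theorem stmt_3_general (m : ℕ) (π : Equiv.Perm (Fin m))
    (α : Fin m → ℝ) (a' : ℝ)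
    (xt : (Fin m → ZMod 2) → Fin m → ZMod 2)
    (hxt : ∀ x n, xt x n =
      if h : (n : ℕ) + 1 < m then x (π n) + x (π ⟨(n : ℕ) + 1, h⟩) else x (π n))
    (fr : (Fin m → ZMod 2) → ℝ)
    (hfr : ∀ x, fr x = (∑ k : Fin m, α k * ((xt x k).val : ℝ)) + a')
    (ha' : a' = -(1/2) * ∑ n : Fin m, Real.log ((1 + Real.exp (2 * α n)) / 2))
    (n : Fin m) :
    (∑ x ∈ Finset.univ.filter (fun x : Fin m → ZMod 2 => xt x n = 1),
        Real.exp (2 * fr x)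
      = Real.exp (2 * α n) *
        ∑ x ∈ Finset.univ.filter (fun x : Fin m → ZMod 2 => xt x n = 0),
          Real.exp (2 * fr x)) ∧
    (∑ x ∈ Finset.univ.filter (fun x : Fin m → ZMod 2 => xt x n = 0),
        Real.exp (2 * fr x)
      = 2 ^ m / (1 + Real.exp (2 * α n))) := by
  set w : Fin m → ZMod 2 → ℝ :=
    fun k b => 2 * Real.exp (2 * α k * b.val) / (1 + Real.exp (2 * α k))
  have hxt_bij : Bijective xt := by
    have hxt_eq : xt = fun x => adjacentSum (x ∘ π) := funext fun x => funext (hxt x)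
    rw [hxt_eq]
    exact Finite.injective_iff_bijective.mp
      (adjacentSum_injective.comp π.surjective.injective_comp_right)
  have hfiber : ∀ c, ∑ x ∈ univ.filter (fun x => xt x n = c), Real.exp (2 * fr x)
      = w n c * ∏ _k ∈ univ.erase n, (2 : ℝ) := by
    intro c
    simp_rw [hfr, exp_two_mul_sum_add_eq_prod α _ a' ha', sum_filter]
    rw [hxt_bij.sum_comp (fun y => if y n = c then ∏ k, w k (y k) else 0), ← sum_filter,
      sum_filter_apply_eq_mul_prod_erase]
    exact congrArg _ (prod_congr rfl fun k _ => sum_zmod_two_exp_div (α k))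
  have hpow : 2 * ∏ _k ∈ univ.erase n, (2 : ℝ) = 2 ^ m := by
    rw [mul_prod_erase univ (fun _ => (2 : ℝ)) (mem_univ n)]
    simp
  have hval_zero : (0 : ZMod 2).val = 0 := rfl
  have hval_one : (1 : ZMod 2).val = 1 := rfl
  refine ⟨?_, ?_⟩
  · rw [hfiber, hfiber]
    simp only [w, hval_one, hval_zero, Nat.cast_one, Nat.cast_zero, mul_one, mul_zero,
      Real.exp_zero]
    ring
  · rw [hfiber, eq_div_iff (by positivity), ← hpow]
    simp only [w, hval_zero, Nat.cast_zero, mul_zero, Real.exp_zero]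
    field_simp

theorem stmt_3 (m : ℕ) (hm : 1 ≤ m) (π : Equiv.Perm (Fin m))
    (α : Fin m → ℝ) (a' : ℝ)
    (xt : (Fin m → ZMod 2) → Fin m → ZMod 2)
    (hxt : ∀ x n, xt x n =
      if h : (n : ℕ) + 1 < m then x (π n) + x (π ⟨(n : ℕ) + 1, h⟩) else x (π n))
    (fr : (Fin m → ZMod 2) → ℝ)
    (hfr : ∀ x, fr x = (∑ k : Fin m, α k * ((xt x k).val : ℝ)) + a')
    (ha' : a' = -(1/2) * ∑ n : Fin m, Real.log ((1 + Real.exp (2 * α n)) / 2))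
    (n : Fin m) :
    (∑ x ∈ Finset.univ.filter (fun x : Fin m → ZMod 2 => xt x n = 1),
        Real.exp (2 * fr x)
      = Real.exp (2 * α n) *
        ∑ x ∈ Finset.univ.filter (fun x : Fin m → ZMod 2 => xt x n = 0),
          Real.exp (2 * fr x)) ∧
    (∑ x ∈ Finset.univ.filter (fun x : Fin m → ZMod 2 => xt x n = 0),
        Real.exp (2 * fr x)
      = 2 ^ m / (1 + Real.exp (2 * α n))) :=
  stmt_3_general m π α a' xt hxt fr hfr ha' n
end

section
/- Let a, b be a complementary pair of complex sequences of length L with ‖a‖² = ‖b‖². Then the PMEPR of a satisfies sup_t |∑_{i} a_i e^{j2πit}|² / ‖a‖² ≤ 2, i.e., the PMEPR of a is at most 3 dB. -/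
/-!
On the unit circle, `|A(z)|² = ‖a‖² + 2 Re ∑_{k ≥ 1} ρ_a(k) zᵏ`: expand `A(z) · conj A(z)`, split
the double sum into its diagonal and the two triangles, and index each triangle by the lag `k`.
For a complementary pair the lag terms cancel, so `|A(z)|² + |B(z)|² = ‖a‖² + ‖b‖² = 2‖a‖²`.
-/

open Finset ComplexConjugate

theorem sum_range_sum_range_eq_diag_add_offDiag {M : Type*} [AddCommMonoid M]
    (f : ℕ → ℕ → M) (L : ℕ) :
    ∑ i ∈ range L, ∑ j ∈ range L, f i j
      = ∑ i ∈ range L, f i i + ∑ j ∈ range L, ∑ i ∈ range j, (f i j + f j i) := by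
  induction L with
  | zero => simp
  | succ L ih =>
    simp only [sum_range_succ, sum_add_distrib, ih]
    abel

theorem sum_range_sum_range_lt_eq_sum_lag {M : Type*} [AddCommMonoid M]
    (f : ℕ → ℕ → M) (L : ℕ) :
    ∑ j ∈ range L, ∑ i ∈ range j, f i j
      = ∑ k ∈ Ico 1 L, ∑ i ∈ range (L - k), f i (i + k) := by
  rw [sum_sigma', sum_sigma']
  refine sum_nbij' (fun p => ⟨p.1 - p.2, p.2⟩) (fun p => ⟨p.2 + p.1, p.2⟩) ?_ ?_ ?_ ?_ ?_ <;>
    simp only [mem_sigma, mem_range, mem_Ico, Sigma.forall, Sigma.mk.inj_iff, heq_eq_eq, and_true]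
  · intro j i h; omega
  · intro k i h; omega
  · intro j i h; omega
  · intro k i h; omega
  · intro j i h; congr; omega

def aperiodicAutocorrelation (L : ℕ) (c : ℕ → ℂ) (k : ℕ) : ℂ :=
  ∑ i ∈ range (L - k), conj (c i) * c (i + k)

theorem norm_sum_mul_pow_sq {z : ℂ} (hz : ‖z‖ = 1) (L : ℕ) (c : ℕ → ℂ) :
    ‖∑ i ∈ range L, c i * z ^ i‖ ^ 2
      = ∑ i ∈ range L, ‖c i‖ ^ 2
        + 2 * (∑ k ∈ Ico 1 L, aperiodicAutocorrelation L c k * z ^ k).re := by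
  set g : ℕ → ℕ → ℝ := fun i j => (c i * z ^ i * conj (c j * z ^ j)).re
  have hzz : conj z * z = 1 := by rw [mul_comm, Complex.mul_conj', hz]; norm_num
  have hsymm : ∀ i j, g j i = g i j := fun i j => by
    simp only [g]; rw [← Complex.conj_re]; simp only [map_mul, Complex.conj_conj, mul_comm]
  have hdiag : ∀ i, g i i = ‖c i‖ ^ 2 := fun i => by
    simp only [g, Complex.mul_conj', norm_mul, norm_pow, hz, one_pow, mul_one]
    norm_cast
  have hlag : ∀ i k, g (i + k) i = (conj (c i) * c (i + k) * z ^ k).re := fun i k => by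
    have : c (i + k) * z ^ (i + k) * conj (c i * z ^ i)
        = conj (c i) * c (i + k) * z ^ k * (conj z * z) ^ i := by
      simp only [map_mul, map_pow]; ring
    simp only [g, this, hzz, one_pow, mul_one]
  have hexpand : ‖∑ i ∈ range L, c i * z ^ i‖ ^ 2
      = ∑ i ∈ range L, ∑ j ∈ range L, g i j := by
    rw [← Complex.ofReal_re (_ ^ 2), Complex.ofReal_pow, ← Complex.mul_conj', map_sum,
      sum_mul_sum, Complex.re_sum]
    simp only [Complex.re_sum, g]
  rw [hexpand, sum_range_sum_range_eq_diag_add_offDiag, sum_range_sum_range_lt_eq_sum_lag]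
  simp only [hsymm (_ + _), ← two_mul, ← mul_sum, hdiag, hlag, aperiodicAutocorrelation,
    sum_mul, Complex.re_sum]

def IsComplementaryPair (L : ℕ) (a b : ℕ → ℂ) : Prop :=
  ∀ k ∈ Ico 1 L, aperiodicAutocorrelation L a k + aperiodicAutocorrelation L b k = 0

theorem IsComplementaryPair.norm_sum_mul_pow_sq_add {L : ℕ} {a b : ℕ → ℂ}
    (hab : IsComplementaryPair L a b) {z : ℂ} (hz : ‖z‖ = 1) :
    ‖∑ i ∈ range L, a i * z ^ i‖ ^ 2 + ‖∑ i ∈ range L, b i * z ^ i‖ ^ 2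
      = ∑ i ∈ range L, ‖a i‖ ^ 2 + ∑ i ∈ range L, ‖b i‖ ^ 2 := by
  have hcancel : ∑ k ∈ Ico 1 L, aperiodicAutocorrelation L a k * z ^ k
      + ∑ k ∈ Ico 1 L, aperiodicAutocorrelation L b k * z ^ k = 0 := by
    rw [← sum_add_distrib]
    exact sum_eq_zero fun k hk => by rw [← add_mul, hab k hk, zero_mul]
  have := congrArg Complex.re hcancel
  rw [Complex.add_re, Complex.zero_re] at this
  rw [norm_sum_mul_pow_sq hz, norm_sum_mul_pow_sq hz]
  linarith

theorem IsComplementaryPair.norm_sum_mul_pow_sq_le {L : ℕ} {a b : ℕ → ℂ}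
    (hab : IsComplementaryPair L a b)
    (hnorm : ∑ i ∈ range L, ‖a i‖ ^ 2 = ∑ i ∈ range L, ‖b i‖ ^ 2) {z : ℂ} (hz : ‖z‖ = 1) :
    ‖∑ i ∈ range L, a i * z ^ i‖ ^ 2 ≤ 2 * ∑ i ∈ range L, ‖a i‖ ^ 2 := by
  have := hab.norm_sum_mul_pow_sq_add hz
  nlinarith [sq_nonneg ‖∑ i ∈ range L, b i * z ^ i‖]

theorem stmt_10_general (L : ℕ) (a b : ℕ → ℂ)
    (ρa ρb : ℕ → ℂ)
    (hρa : ∀ k, ρa k = ∑ i ∈ Finset.range (L - k), (starRingEnd ℂ) (a i) * a (i + k))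
    (hρb : ∀ k, ρb k = ∑ i ∈ Finset.range (L - k), (starRingEnd ℂ) (b i) * b (i + k))
    (hcomp : ∀ k, 1 ≤ k → k ≤ L - 1 → ρa k + ρb k = 0)
    (hnorm : (∑ i ∈ Finset.range L, ‖a i‖ ^ 2)
      = ∑ i ∈ Finset.range L, ‖b i‖ ^ 2) :
    ∀ t : ℝ,
      (‖∑ i ∈ Finset.range L,
          a i * Complex.exp (Complex.I * (2 * Real.pi * i * t))‖) ^ 2
        / (∑ i ∈ Finset.range L, ‖a i‖ ^ 2) ≤ 2 := by
  intro t
  have hab : IsComplementaryPair L a b := fun k hk => by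
    rw [mem_Ico] at hk
    rw [aperiodicAutocorrelation, aperiodicAutocorrelation, ← hρa, ← hρb]
    exact hcomp k hk.1 (by omega)
  have hpow : ∀ i : ℕ, Complex.exp (Complex.I * (2 * Real.pi * i * t))
      = Complex.exp (Complex.I * (2 * Real.pi * t)) ^ i := fun i => by
    rw [← Complex.exp_nat_mul]; ring_nf
  simp only [hpow]
  refine div_le_of_le_mul₀ (sum_nonneg fun i _ => by positivity) zero_le_two ?_
  exact hab.norm_sum_mul_pow_sq_le hnorm (by exact_mod_cast Complex.norm_exp_I_mul_ofReal _)

theorem stmt_10 (L : ℕ) (hL : 1 ≤ L) (a b : ℕ → ℂ)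
    (ρa ρb : ℕ → ℂ)
    (hρa : ∀ k, ρa k = ∑ i ∈ Finset.range (L - k), (starRingEnd ℂ) (a i) * a (i + k))
    (hρb : ∀ k, ρb k = ∑ i ∈ Finset.range (L - k), (starRingEnd ℂ) (b i) * b (i + k))
    (hcomp : ∀ k, 1 ≤ k → k ≤ L - 1 → ρa k + ρb k = 0)
    (hnorm : (∑ i ∈ Finset.range L, ‖a i‖ ^ 2)
      = ∑ i ∈ Finset.range L, ‖b i‖ ^ 2) :
    ∀ t : ℝ,
      (‖∑ i ∈ Finset.range L,
          a i * Complex.exp (Complex.I * (2 * Real.pi * i * t))‖) ^ 2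
        / (∑ i ∈ Finset.range L, ‖a i‖ ^ 2) ≤ 2 :=
  stmt_10_general L a b ρa ρb hρa hρb hcomp hnorm
end
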